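/- Let k₁, k₂, k₃, k₄ be positive integers with k₁+k₂ = k₃+k₄ and with the multiset {k₁,k₂} different from the multiset {k₃,k₄}; let l ≥ 0 be an integer and v₁,…,v_l positive integers. Set F₄(q) = (1−q^{2k₁+2k₂−2})⁻¹ · (1−q^{2k₃−2k₁})⁻¹ · (1−q^{2k₄−2k₁})⁻¹ · Π_{r=1}^{4} (1−q^{4k_r−2})⁻¹ · Π_{i=1}^{l} (1−q^{2v_i})⁻¹ and F̃₄(q) = (1−q^{4k₁+4k₂−4})⁻¹ · (1−q^{4k₃−4k₁})⁻¹ · (1−q^{4k₄−4k₁})⁻¹ · Π_{r=1}^{4} (1−q^{2k_r−1})⁻¹ · Π_{i=1}^{l} (1−q^{2v_i})⁻¹ in ℚ(q). Then q^{2k₁−1}·F₄(q) = (1/2)·(F̃₄(q) − F̃₄(−q)). -/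
import Mathlib

open RatFunc in
theorem X_zpow_ne_one_aux (n : ℤ) (hn : n ≠ 0) : (X : RatFunc ℚ) ^ n ≠ 1 := by
  have key : ∀ m : ℕ, m ≠ 0 → (X : RatFunc ℚ) ^ (m : ℤ) ≠ 1 := by
    intro m hm h
    rw [zpow_natCast] at h
    have : (Polynomial.X : Polynomial ℚ) ^ m = 1 := by
      apply RatFunc.algebraMap_injective ℚ
      simpa [map_pow, RatFunc.algebraMap_X] using h
    have := congrArg Polynomial.natDegree this
    simp [Polynomial.natDegree_X_pow] at this
    exact hm this
  rcases lt_trichotomy n 0 with h | h | h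
  · intro he
    have h2 : (X : RatFunc ℚ) ^ (-n) = 1 := by rw [zpow_neg, he, inv_one]
    rw [show -n = (((-n).toNat : ℕ) : ℤ) by omega] at h2
    exact key (-n).toNat (by omega) h2
  · exact absurd h hn
  · intro he
    rw [show n = ((n.toNat : ℕ) : ℤ) by omega] at he
    exact key n.toNat (by omega) he

open RatFunc in
theorem one_sub_X_zpow_ne (m : ℤ) (hm : m ≠ 0) : (1 : RatFunc ℚ) - (X : RatFunc ℚ) ^ m ≠ 0 :=
  sub_ne_zero_of_ne (Ne.symm (X_zpow_ne_one_aux m hm))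

open RatFunc in
theorem one_add_X_zpow_ne (m : ℤ) (hm : m ≠ 0) : (1 : RatFunc ℚ) + (X : RatFunc ℚ) ^ m ≠ 0 := by
  intro h
  have hx : (X : RatFunc ℚ) ^ m = -1 := by linear_combination h
  have h2 : (X : RatFunc ℚ) ^ (m + m) = 1 := by
    rw [zpow_add₀ (RatFunc.X_ne_zero (K := ℚ)), hx]; ring
  exact X_zpow_ne_one_aux (m + m) (by omega) h2

set_option maxHeartbeats 1000000 in
theorem key_s4 {F : Type*} [Field F] (a e f : F)
    (n1 : 1 - a*a*e*f ≠ 0) (n2 : 1 - e ≠ 0) (n3 : 1 - f ≠ 0)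
    (pa : 1 - a ≠ 0) (qa : 1 + a ≠ 0)
    (pb : 1 - a*e*f ≠ 0) (qb : 1 + a*e*f ≠ 0)
    (pc : 1 - a*e ≠ 0) (qc : 1 + a*e ≠ 0)
    (pd : 1 - a*f ≠ 0) (qd : 1 + a*f ≠ 0)
    (m1 : 1 - (a*a*e*f)*(a*a*e*f) ≠ 0) (m2 : 1 - e*e ≠ 0) (m3 : 1 - f*f ≠ 0)
    (h2F : (2 : F) ≠ 0) :
    a * ((1 - a*a*e*f)⁻¹ * (1 - e)⁻¹ * (1 - f)⁻¹ * (1 - a*a)⁻¹ *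
        (1 - (a*e*f)*(a*e*f))⁻¹ * (1 - (a*e)*(a*e))⁻¹ * (1 - (a*f)*(a*f))⁻¹)
    = (1 / 2 : F) *
        (((1 - (a*a*e*f)*(a*a*e*f)) * ((1 - e*e) * (1 - f*f)))⁻¹ *
          (((1 - a) * ((1 - a*e*f) * ((1 - a*e) * (1 - a*f))))⁻¹
           - ((1 + a) * ((1 + a*e*f) * ((1 + a*e) * (1 + a*f))))⁻¹)) := by
  have n4 : 1 - a*a ≠ 0 := by
    have := mul_ne_zero pa qa; rwa [show (1-a)*(1+a) = 1 - a*a by ring] at this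
  have m4 : 1 - (a*e*f)*(a*e*f) ≠ 0 := by
    have := mul_ne_zero pb qb; rwa [show (1-a*e*f)*(1+a*e*f) = 1 - (a*e*f)*(a*e*f) by ring] at this
  have m5 : 1 - (a*e)*(a*e) ≠ 0 := by
    have := mul_ne_zero pc qc; rwa [show (1-a*e)*(1+a*e) = 1 - (a*e)*(a*e) by ring] at this
  have m6 : 1 - (a*f)*(a*f) ≠ 0 := by
    have := mul_ne_zero pd qd; rwa [show (1-a*f)*(1+a*f) = 1 - (a*f)*(a*f) by ring] at this
  have hT : (1 - a*a*e*f) * (1 - e) * (1 - f) * (1 - a*a) *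
      (1 - (a*e*f)*(a*e*f)) * (1 - (a*e)*(a*e)) * (1 - (a*f)*(a*f)) ≠ 0 :=
    mul_ne_zero (mul_ne_zero (mul_ne_zero (mul_ne_zero (mul_ne_zero (mul_ne_zero n1 n2) n3) n4) m4) m5) m6
  have hC : (1 - (a*a*e*f)*(a*a*e*f)) * ((1 - e*e) * (1 - f*f)) ≠ 0 :=
    mul_ne_zero m1 (mul_ne_zero m2 m3)
  have hP : (1 - a) * ((1 - a*e*f) * ((1 - a*e) * (1 - a*f))) ≠ 0 :=
    mul_ne_zero pa (mul_ne_zero pb (mul_ne_zero pc pd))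
  have hM : (1 + a) * ((1 + a*e*f) * ((1 + a*e) * (1 + a*f))) ≠ 0 :=
    mul_ne_zero qa (mul_ne_zero qb (mul_ne_zero qc qd))
  simp only [← mul_inv]
  rw [inv_sub_inv hP hM, inv_mul_eq_div, div_div, ← div_eq_mul_inv,
    div_mul_div_comm, div_eq_div_iff hT (mul_ne_zero h2F (mul_ne_zero (mul_ne_zero hP hM) hC))]
  ring

set_option maxHeartbeats 1000000 in
theorem key_s4' {F : Type*} [Field F] (a e f : F)
    (n1 : 1 - a*a*e*f ≠ 0) (n2 : 1 - e ≠ 0) (n3 : 1 - f ≠ 0)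
    (pa : 1 - a ≠ 0) (qa : 1 + a ≠ 0)
    (pb : 1 - a*e*f ≠ 0) (qb : 1 + a*e*f ≠ 0)
    (pc : 1 - a*e ≠ 0) (qc : 1 + a*e ≠ 0)
    (pd : 1 - a*f ≠ 0) (qd : 1 + a*f ≠ 0)
    (m1 : 1 - (a*a*e*f)*(a*a*e*f) ≠ 0) (m2 : 1 - e*e ≠ 0) (m3 : 1 - f*f ≠ 0)
    (h2F : (2 : F) ≠ 0) :
    a * ((1 - a*a*e*f)⁻¹ * (1 - e)⁻¹ * (1 - f)⁻¹ * (1 - a*a)⁻¹ *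
        (1 - (a*e*f)*(a*e*f))⁻¹ * (1 - (a*e)*(a*e))⁻¹ * (1 - (a*f)*(a*f))⁻¹)
    = (1 / 2 : F) *
        ((1 - (a*a*e*f)*(a*a*e*f))⁻¹ * (1 - e*e)⁻¹ * (1 - f*f)⁻¹ *
          (1 - a)⁻¹ * (1 - a*e*f)⁻¹ * (1 - a*e)⁻¹ * (1 - a*f)⁻¹
         - (1 - (a*a*e*f)*(a*a*e*f))⁻¹ * (1 - e*e)⁻¹ * (1 - f*f)⁻¹ *
          (1 + a)⁻¹ * (1 + a*e*f)⁻¹ * (1 + a*e)⁻¹ * (1 + a*f)⁻¹) := by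
  have h := key_s4 a e f n1 n2 n3 pa qa pb qb pc qc pd qd m1 m2 m3 h2F
  simp only [mul_inv] at h
  linear_combination h

open RatFunc in
/-- For positive integers `k₁, k₂, k₃, k₄` with `k₁+k₂ = k₃+k₄` and `{k₁,k₂} ≠ {k₃,k₄}` as
multisets, and positive integers `v₁, …, v_l`, with
`F₄(q) = (1−q^{2k₁+2k₂−2})⁻¹ (1−q^{2k₃−2k₁})⁻¹ (1−q^{2k₄−2k₁})⁻¹ Π_{r=1}^4 (1−q^{4k_r−2})⁻¹
Π_i (1−q^{2v_i})⁻¹` and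
`F̃₄(q) = (1−q^{4k₁+4k₂−4})⁻¹ (1−q^{4k₃−4k₁})⁻¹ (1−q^{4k₄−4k₁})⁻¹ Π_{r=1}^4 (1−q^{2k_r−1})⁻¹
Π_i (1−q^{2v_i})⁻¹` in `ℚ(q)`, one has `q^{2k₁−1} F₄(q) = (1/2)(F̃₄(q) − F̃₄(−q))`. -/
theorem ratfunc_identity_s4 (k₁ k₂ k₃ k₄ : ℤ)
    (hk₁ : 0 < k₁) (hk₂ : 0 < k₂) (hk₃ : 0 < k₃) (hk₄ : 0 < k₄)
    (hsum : k₁ + k₂ = k₃ + k₄) (hne : ({k₁, k₂} : Multiset ℤ) ≠ {k₃, k₄})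
    (l : ℕ) (v : Fin l → ℕ) (hv : ∀ i, 0 < v i) :
    (X : RatFunc ℚ) ^ (2 * k₁ - 1) *
      ((1 - (X : RatFunc ℚ) ^ (2 * k₁ + 2 * k₂ - 2))⁻¹ *
        (1 - (X : RatFunc ℚ) ^ (2 * k₃ - 2 * k₁))⁻¹ *
        (1 - (X : RatFunc ℚ) ^ (2 * k₄ - 2 * k₁))⁻¹ *
        (1 - (X : RatFunc ℚ) ^ (4 * k₁ - 2))⁻¹ *
        (1 - (X : RatFunc ℚ) ^ (4 * k₂ - 2))⁻¹ *
        (1 - (X : RatFunc ℚ) ^ (4 * k₃ - 2))⁻¹ *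
        (1 - (X : RatFunc ℚ) ^ (4 * k₄ - 2))⁻¹ *
        ∏ i, (1 - (X : RatFunc ℚ) ^ (2 * (v i : ℤ)))⁻¹)
    = (1 / 2 : RatFunc ℚ) *
        ((1 - (X : RatFunc ℚ) ^ (4 * k₁ + 4 * k₂ - 4))⁻¹ *
          (1 - (X : RatFunc ℚ) ^ (4 * k₃ - 4 * k₁))⁻¹ *
          (1 - (X : RatFunc ℚ) ^ (4 * k₄ - 4 * k₁))⁻¹ *
          (1 - (X : RatFunc ℚ) ^ (2 * k₁ - 1))⁻¹ *
          (1 - (X : RatFunc ℚ) ^ (2 * k₂ - 1))⁻¹ *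
          (1 - (X : RatFunc ℚ) ^ (2 * k₃ - 1))⁻¹ *
          (1 - (X : RatFunc ℚ) ^ (2 * k₄ - 1))⁻¹ *
          ∏ i, (1 - (X : RatFunc ℚ) ^ (2 * (v i : ℤ)))⁻¹
         - ((1 - (-(X : RatFunc ℚ)) ^ (4 * k₁ + 4 * k₂ - 4))⁻¹ *
            (1 - (-(X : RatFunc ℚ)) ^ (4 * k₃ - 4 * k₁))⁻¹ *
            (1 - (-(X : RatFunc ℚ)) ^ (4 * k₄ - 4 * k₁))⁻¹ *
            (1 - (-(X : RatFunc ℚ)) ^ (2 * k₁ - 1))⁻¹ *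
            (1 - (-(X : RatFunc ℚ)) ^ (2 * k₂ - 1))⁻¹ *
            (1 - (-(X : RatFunc ℚ)) ^ (2 * k₃ - 1))⁻¹ *
            (1 - (-(X : RatFunc ℚ)) ^ (2 * k₄ - 1))⁻¹ *
            ∏ i, (1 - (-(X : RatFunc ℚ)) ^ (2 * (v i : ℤ)))⁻¹)) := by
  have hX : (X : RatFunc ℚ) ≠ 0 := RatFunc.X_ne_zero
  -- k₃ ≠ k₁ and k₄ ≠ k₁
  have hk31 : k₃ ≠ k₁ := by
    intro h
    exact hne (by rw [h, show k₄ = k₂ by omega])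
  have hk41 : k₄ ≠ k₁ := by
    intro h
    apply hne
    rw [h, show k₃ = k₂ by omega]
    exact Multiset.cons_swap k₁ k₂ 0
  -- eliminate the -X occurrences
  rw [Even.neg_zpow ⟨2*k₁+2*k₂-2, by ring⟩, Even.neg_zpow ⟨2*k₃-2*k₁, by ring⟩,
    Even.neg_zpow ⟨2*k₄-2*k₁, by ring⟩,
    Odd.neg_zpow ⟨k₁-1, by ring⟩, Odd.neg_zpow ⟨k₂-1, by ring⟩,
    Odd.neg_zpow ⟨k₃-1, by ring⟩, Odd.neg_zpow ⟨k₄-1, by ring⟩]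
  have hEv : ∀ m : ℤ, (-(X : RatFunc ℚ)) ^ (2*m) = (X : RatFunc ℚ) ^ (2*m) :=
    fun m => Even.neg_zpow ⟨m, by ring⟩ _
  simp only [hEv, sub_neg_eq_add]
  -- decompose exponents into p = 2k₁-1, s = 2k₃-2k₁, t = 2k₄-2k₁
  rw [show (2*k₁+2*k₂-2 : ℤ) = (2*k₁-1) + (2*k₁-1) + (2*k₃-2*k₁) + (2*k₄-2*k₁) by omega,
    show (4*k₁-2 : ℤ) = (2*k₁-1) + (2*k₁-1) by ring,
    show (4*k₂-2 : ℤ) = ((2*k₁-1) + (2*k₃-2*k₁) + (2*k₄-2*k₁)) + ((2*k₁-1) + (2*k₃-2*k₁) + (2*k₄-2*k₁)) by omega,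
    show (4*k₃-2 : ℤ) = ((2*k₁-1) + (2*k₃-2*k₁)) + ((2*k₁-1) + (2*k₃-2*k₁)) by ring,
    show (4*k₄-2 : ℤ) = ((2*k₁-1) + (2*k₄-2*k₁)) + ((2*k₁-1) + (2*k₄-2*k₁)) by ring,
    show (4*k₁+4*k₂-4 : ℤ) = ((2*k₁-1) + (2*k₁-1) + (2*k₃-2*k₁) + (2*k₄-2*k₁)) + ((2*k₁-1) + (2*k₁-1) + (2*k₃-2*k₁) + (2*k₄-2*k₁)) by omega,
    show (4*k₃-4*k₁ : ℤ) = (2*k₃-2*k₁) + (2*k₃-2*k₁) by ring,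
    show (4*k₄-4*k₁ : ℤ) = (2*k₄-2*k₁) + (2*k₄-2*k₁) by ring,
    show (2*k₂-1 : ℤ) = (2*k₁-1) + (2*k₃-2*k₁) + (2*k₄-2*k₁) by omega,
    show (2*k₃-1 : ℤ) = (2*k₁-1) + (2*k₃-2*k₁) by ring,
    show (2*k₄-1 : ℤ) = (2*k₁-1) + (2*k₄-2*k₁) by ring]
  simp only [zpow_add₀ hX]
  -- abbreviations
  set a : RatFunc ℚ := (X : RatFunc ℚ) ^ (2*k₁-1) with ha
  set e : RatFunc ℚ := (X : RatFunc ℚ) ^ (2*k₃-2*k₁) with he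
  set f : RatFunc ℚ := (X : RatFunc ℚ) ^ (2*k₄-2*k₁) with hf
  -- nonvanishing facts
  have merge : ∀ x y : ℤ, (X : RatFunc ℚ) ^ x * (X : RatFunc ℚ) ^ y = (X : RatFunc ℚ) ^ (x+y) :=
    fun x y => (zpow_add₀ hX x y).symm
  have n1 : (1 : RatFunc ℚ) - a*a*e*f ≠ 0 := by
    rw [ha, he, hf, merge, merge, merge]; exact one_sub_X_zpow_ne _ (by omega)
  have n2 : (1 : RatFunc ℚ) - e ≠ 0 := one_sub_X_zpow_ne _ (by omega)
  have n3 : (1 : RatFunc ℚ) - f ≠ 0 := one_sub_X_zpow_ne _ (by omega)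
  have pa : (1 : RatFunc ℚ) - a ≠ 0 := one_sub_X_zpow_ne _ (by omega)
  have qa : (1 : RatFunc ℚ) + a ≠ 0 := one_add_X_zpow_ne _ (by omega)
  have pb : (1 : RatFunc ℚ) - a*e*f ≠ 0 := by
    rw [ha, he, hf, merge, merge]; exact one_sub_X_zpow_ne _ (by omega)
  have qb : (1 : RatFunc ℚ) + a*e*f ≠ 0 := by
    rw [ha, he, hf, merge, merge]; exact one_add_X_zpow_ne _ (by omega)
  have pc : (1 : RatFunc ℚ) - a*e ≠ 0 := by
    rw [ha, he, merge]; exact one_sub_X_zpow_ne _ (by omega)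
  have qc : (1 : RatFunc ℚ) + a*e ≠ 0 := by
    rw [ha, he, merge]; exact one_add_X_zpow_ne _ (by omega)
  have pd : (1 : RatFunc ℚ) - a*f ≠ 0 := by
    rw [ha, hf, merge]; exact one_sub_X_zpow_ne _ (by omega)
  have qd : (1 : RatFunc ℚ) + a*f ≠ 0 := by
    rw [ha, hf, merge]; exact one_add_X_zpow_ne _ (by omega)
  have m1 : (1 : RatFunc ℚ) - (a*a*e*f)*(a*a*e*f) ≠ 0 := by
    rw [ha, he, hf, merge, merge, merge, merge]; exact one_sub_X_zpow_ne _ (by omega)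
  have m2 : (1 : RatFunc ℚ) - e*e ≠ 0 := by
    rw [he, merge]; exact one_sub_X_zpow_ne _ (by omega)
  have m3 : (1 : RatFunc ℚ) - f*f ≠ 0 := by
    rw [hf, merge]; exact one_sub_X_zpow_ne _ (by omega)
  have h2F : (2 : RatFunc ℚ) ≠ 0 := by
    intro h
    have h2 : (2 : ℚ) = 0 := by
      apply RingHom.injective (algebraMap ℚ (RatFunc ℚ))
      rw [map_ofNat, map_zero]
      exact_mod_cast h
    norm_num at h2
  linear_combination (∏ i, (1 - (X : RatFunc ℚ) ^ (2 * (v i : ℤ)))⁻¹) *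
    key_s4' a e f n1 n2 n3 pa qa pb qb pc qc pd qd m1 m2 m3 h2F
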